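/- Let k be an algebraically closed field of characteristic 0 and H a finitely generated commutative Hopf k-algebra such that ⋂_{n ≥ 0} (ker ε)ⁿ = 0 (this holds in particular when H is the coordinate algebra O(G) of a connected linear algebraic k-group G). Then every partial H-comodule (M, ρ) is global, i.e., ρ is coassociative: (ρ ⊗ H)∘ρ = (M ⊗ Δ)∘ρ, so that (M, ρ) is an ordinary H-comodule. -/

import Mathlib

open TensorProduct CategoryTheory CategoryTheory.Limits

noncomputable section

universe u

variable (k : Type u) [Field k] (H : Type u) [Ring H] [HopfAlgebra k H]

/-- Multiply the last two tensor factors using the multiplication of `H`. -/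
def mulLast (X : Type u) [AddCommGroup X] [Module k X] :
    ((X ⊗[k] H) ⊗[k] H) →ₗ[k] X ⊗[k] H :=
  (LinearMap.lTensor X (LinearMap.mul' k H)) ∘ₗ (TensorProduct.assoc k X H H).toLinearMap

/-- Comultiply the last tensor factor using the comultiplication of `H`. -/
def comulLast (X : Type u) [AddCommGroup X] [Module k X] :
    (X ⊗[k] H) →ₗ[k] (X ⊗[k] H) ⊗[k] H :=
  (TensorProduct.assoc k X H H).symm.toLinearMap ∘ₗ LinearMap.lTensor X Coalgebra.comul

/-- Apply the antipode to the last tensor factor. -/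
def antLast (X : Type u) [AddCommGroup X] [Module k X] :
    (X ⊗[k] H) →ₗ[k] X ⊗[k] H :=
  LinearMap.lTensor X (HopfAlgebra.antipode (R := k) (A := H))

/-- Apply the counit to the last tensor factor. -/
def counitLast (X : Type u) [AddCommGroup X] [Module k X] :
    (X ⊗[k] H) →ₗ[k] X :=
  (TensorProduct.rid k X).toLinearMap ∘ₗ LinearMap.lTensor X Coalgebra.counit

variable {M : Type u} [AddCommGroup M] [Module k M]

/-- `(M, ρ)` is a (right, algebraic) partial `H`-comodule: (PCM1) `ρ` is counital,
(PCM2) and (PCM3) express partial coassociativity. -/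
structure IsPartialComodule (ρ : M →ₗ[k] M ⊗[k] H) : Prop where
  counit : counitLast k H M ∘ₗ ρ = LinearMap.id
  pcm2 :
    mulLast k H (M ⊗[k] H) ∘ₗ antLast k H ((M ⊗[k] H) ⊗[k] H) ∘ₗ
        LinearMap.rTensor H (comulLast k H M) ∘ₗ LinearMap.rTensor H ρ ∘ₗ ρ =
    mulLast k H (M ⊗[k] H) ∘ₗ antLast k H ((M ⊗[k] H) ⊗[k] H) ∘ₗ
        LinearMap.rTensor H (LinearMap.rTensor H ρ) ∘ₗ LinearMap.rTensor H ρ ∘ₗ ρ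
  pcm3 :
    LinearMap.rTensor H (mulLast k H M) ∘ₗ LinearMap.rTensor H (antLast k H (M ⊗[k] H)) ∘ₗ
        comulLast k H (M ⊗[k] H) ∘ₗ LinearMap.rTensor H ρ ∘ₗ ρ =
    LinearMap.rTensor H (mulLast k H M) ∘ₗ LinearMap.rTensor H (antLast k H (M ⊗[k] H)) ∘ₗ
        LinearMap.rTensor H (LinearMap.rTensor H ρ) ∘ₗ LinearMap.rTensor H ρ ∘ₗ ρ

/-!
Write `ρ m = m₀ ⊗ m₁`, `e m = m₀₀ ⊗ m₀₁ S(m₁)` (`twist`) and `P (m ⊗ h) = e(m) h`. The map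
`z ⊗ h ↦ z S(h₁) ⊗ h₂` that (PCM3) applies to `(ρ ⊗ H) ρ` is inverted by the Galois map
`z ⊗ h ↦ z h₁ ⊗ h₂`, so (PCM3) says `(ρ ⊗ H) ρ = (P ⊗ H)(M ⊗ Δ) ρ`. Applying `ε` to the last
factor and using (PCM1) gives `P ρ = ρ`, i.e. `∑ g(m₀) m₁ = 0` for `g = e - (· ⊗ 1)`. Hence
`g(m) = ∑ g(x) a` where `m ⊗ 1 - ρ m = ∑ x ⊗ a` lies in `M ⊗ ker ε` by (PCM1). So if `g` takes
values in `M ⊗ (ker ε)ⁿ`, it takes values in `M ⊗ (ker ε)ⁿ⁺¹`; as `M` is free over `k`,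
`⋂ₙ M ⊗ (ker ε)ⁿ = M ⊗ ⋂ₙ (ker ε)ⁿ = 0`. Thus `e = (· ⊗ 1)`, `P = id`, and
`(ρ ⊗ H) ρ = (M ⊗ Δ) ρ`.
-/

open LinearMap Coalgebra HopfAlgebra

lemma LinearMap.rTensor_assoc_symm_tmul {R A B C D : Type*} [CommSemiring R]
    [AddCommMonoid A] [AddCommMonoid B] [AddCommMonoid C] [AddCommMonoid D]
    [Module R A] [Module R B] [Module R C] [Module R D]
    (F : A ⊗[R] B →ₗ[R] D) (a : A) (t : B ⊗[R] C) :
    rTensor C F ((TensorProduct.assoc R A B C).symm (a ⊗ₜ t)) =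
      rTensor C (F ∘ₗ TensorProduct.mk R A B a) t := by
  induction t using TensorProduct.induction_on with
  | zero => simp
  | tmul b c => simp
  | add t t' ht ht' => simp only [tmul_add, map_add, ht, ht']

-- `∑ S(a₁) a₂ ⊗ a₃ = 1 ⊗ a`
lemma HopfAlgebra.rTensor_mul_antipode_rTensor_coassoc_apply {R A : Type*} [CommSemiring R]
    [Semiring A] [HopfAlgebra R A] (a : A) :
    rTensor A (mul' R A ∘ₗ rTensor A (antipode R))
      ((TensorProduct.assoc R A A A).symm (lTensor A comul (comul a))) = 1 ⊗ₜ a := by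
  rw [coassoc_symm_apply, ← rTensor_comp_apply, comp_assoc, mul_antipode_rTensor_comul,
    rTensor_comp_apply, rTensor_counit_comul]
  simp

section Last

variable {X Y : Type u} [AddCommGroup X] [Module k X] [AddCommGroup Y] [Module k Y]

@[simp] lemma mulLast_tmul (x : X) (a b : H) :
    mulLast k H X ((x ⊗ₜ a) ⊗ₜ b) = x ⊗ₜ (a * b) := by
  simp [mulLast]

@[simp] lemma counitLast_tmul (x : X) (h : H) :
    counitLast k H X (x ⊗ₜ h) = counit (R := k) h • x := by
  simp [counitLast]

lemma comulLast_tmul (x : X) (h : H) :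
    comulLast k H X (x ⊗ₜ h) = (TensorProduct.assoc k X H H).symm (x ⊗ₜ comul h) := rfl

@[simp] lemma mulLast_tmul_one (z : X ⊗[k] H) : mulLast k H X (z ⊗ₜ 1) = z := by
  induction z using TensorProduct.induction_on with
  | zero => simp
  | tmul x a => simp
  | add z z' hz hz' => simp only [add_tmul, map_add, hz, hz']

lemma mulLast_mulLast (z : X ⊗[k] H) (a b : H) :
    mulLast k H X (mulLast k H X (z ⊗ₜ a) ⊗ₜ b) = mulLast k H X (z ⊗ₜ (a * b)) := by
  induction z using TensorProduct.induction_on with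
  | zero => simp
  | tmul x c => simp [mul_assoc]
  | add z z' hz hz' => simp only [add_tmul, map_add, hz, hz']

lemma counitLast_comp_rTensor (f : X →ₗ[k] Y) :
    counitLast k H Y ∘ₗ rTensor H f = f ∘ₗ counitLast k H X :=
  TensorProduct.ext' fun x h => by simp

lemma counitLast_comp_comulLast : counitLast k H (X ⊗[k] H) ∘ₗ comulLast k H X = LinearMap.id := by
  refine TensorProduct.ext' fun x h => ?_
  have key (t : H ⊗[k] H) : counitLast k H (X ⊗[k] H) ((TensorProduct.assoc k X H H).symm (x ⊗ₜ t))
      = x ⊗ₜ counitLast k H H t := by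
    induction t using TensorProduct.induction_on with
    | zero => simp
    | tmul a b => simp [tmul_smul, smul_tmul']
    | add t t' ht ht' => simp only [tmul_add, map_add, ht, ht']
  rw [LinearMap.comp_apply, comulLast_tmul, key]
  simp [counitLast]

variable (X) in
def unitLast : X →ₗ[k] X ⊗[k] H :=
  (TensorProduct.mk k X H).flip 1

@[simp] lemma unitLast_apply (x : X) : unitLast k H X x = x ⊗ₜ 1 := rfl

lemma mulLast_comp_rTensor_unitLast : mulLast k H X ∘ₗ rTensor H (unitLast k H X) = LinearMap.id :=
  TensorProduct.ext' fun x h => by simp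

variable (X) in
def galoisLast : (X ⊗[k] H) ⊗[k] H →ₗ[k] (X ⊗[k] H) ⊗[k] H :=
  rTensor H (mulLast k H X) ∘ₗ comulLast k H (X ⊗[k] H)

variable (X) in
def galoisLastInv : (X ⊗[k] H) ⊗[k] H →ₗ[k] (X ⊗[k] H) ⊗[k] H :=
  rTensor H (mulLast k H X) ∘ₗ rTensor H (antLast k H (X ⊗[k] H)) ∘ₗ comulLast k H (X ⊗[k] H)

lemma galoisLast_tmul (z : X ⊗[k] H) (h : H) :
    galoisLast k H X (z ⊗ₜ h) =
      rTensor H (mulLast k H X ∘ₗ TensorProduct.mk k _ H z) (comul (R := k) h) :=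
  rTensor_assoc_symm_tmul _ z _

lemma galoisLastInv_tmul (z : X ⊗[k] H) (h : H) :
    galoisLastInv k H X (z ⊗ₜ h) =
      rTensor H (mulLast k H X ∘ₗ TensorProduct.mk k _ H z ∘ₗ antipode k) (comul (R := k) h) := by
  rw [galoisLastInv, LinearMap.comp_apply, LinearMap.comp_apply, comulLast_tmul,
    ← rTensor_comp_apply, rTensor_assoc_symm_tmul]
  rfl

lemma galoisLast_comp_galoisLastInv : galoisLast k H X ∘ₗ galoisLastInv k H X = LinearMap.id := by
  -- `∑ z S(h₁) h₂ ⊗ h₃ = z ⊗ h`, by coassociativity and the antipode axiom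
  refine TensorProduct.ext' fun z h => ?_
  have hcomp : ∀ t : H ⊗[k] H,
      galoisLast k H X (rTensor H (mulLast k H X ∘ₗ TensorProduct.mk k _ H z ∘ₗ antipode k) t) =
        rTensor H (mulLast k H X ∘ₗ TensorProduct.mk k _ H z)
          (rTensor H (mul' k H ∘ₗ rTensor H (antipode k))
            ((TensorProduct.assoc k H H H).symm (lTensor H comul t))) := by
    intro t
    induction t using TensorProduct.induction_on with
    | zero => simp
    | tmul a b =>
      rw [rTensor_tmul, lTensor_tmul, galoisLast_tmul, rTensor_assoc_symm_tmul,
        ← rTensor_comp_apply]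
      congr 2
      ext c
      simp [mulLast_mulLast]
    | add t t' ht ht' => simp only [map_add, ht, ht']
  rw [LinearMap.comp_apply, galoisLastInv_tmul, hcomp, rTensor_mul_antipode_rTensor_coassoc_apply]
  simp

lemma galoisLast_comp_rTensor (f : Y →ₗ[k] X ⊗[k] H) :
    galoisLast k H X ∘ₗ rTensor H f =
      rTensor H (mulLast k H X ∘ₗ rTensor H f) ∘ₗ comulLast k H Y := by
  refine TensorProduct.ext' fun y h => ?_
  rw [LinearMap.comp_apply, rTensor_tmul, galoisLast_tmul, LinearMap.comp_apply, comulLast_tmul,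
    rTensor_assoc_symm_tmul]
  rfl

end Last

section TensorIdeal

variable {H : Type u} [Ring H] [Algebra k H] {X : Type u} [AddCommGroup X] [Module k X]

variable (X) in
def tensorIdeal (I : Ideal H) : Submodule k (X ⊗[k] H) :=
  range (lTensor X (I.restrictScalars k).subtype)

lemma tmul_mem_tensorIdeal (x : X) {I : Ideal H} {a : H} (ha : a ∈ I) :
    x ⊗ₜ a ∈ tensorIdeal k X I :=
  ⟨x ⊗ₜ ⟨a, ha⟩, rfl⟩

lemma mem_tensorIdeal_top (z : X ⊗[k] H) : z ∈ tensorIdeal k X ⊤ :=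
  lTensor_surjective X (fun a => ⟨⟨a, Submodule.mem_top⟩, rfl⟩) z

lemma eq_zero_of_forall_mem_tensorIdeal {ι : Type*} {I : ι → Ideal H} (hI : ⨅ i, I i = ⊥)
    {z : X ⊗[k] H} (hz : ∀ i, z ∈ tensorIdeal k X (I i)) : z = 0 := by
  classical
  let b := Module.Basis.ofVectorSpace k X
  let coord : X ⊗[k] H ≃ₗ[k] (Module.Basis.ofVectorSpaceIndex k X →₀ H) :=
    (TensorProduct.congr b.repr (LinearEquiv.refl k H)).trans (finsuppScalarLeft k H _)
  have hcoord (i) (j) : coord z j ∈ I i := by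
    obtain ⟨t, rfl⟩ := hz i
    clear hz
    induction t using TensorProduct.induction_on with
    | zero => simp
    | tmul x a =>
      simp only [coord, lTensor_tmul, Submodule.subtype_apply, LinearEquiv.trans_apply,
        congr_tmul, finsuppScalarLeft_apply_tmul, Finsupp.sum_apply, Finsupp.single_apply]
      refine Submodule.finsuppSum_mem _ _ _ _ fun c _ => ?_
      split_ifs
      exacts [Submodule.smul_of_tower_mem _ _ a.2, zero_mem _]
    | add t t' ht ht' => simpa only [map_add, Finsupp.add_apply] using (I i).add_mem ht ht'
  have : coord z = 0 := Finsupp.ext fun j => by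
    simpa [hI] using (Submodule.mem_iInf I).mpr fun i => hcoord i j
  simpa using this

end TensorIdeal

section Filtration

variable {X Y : Type u} [AddCommGroup X] [Module k X] [AddCommGroup Y] [Module k Y]

lemma mulLast_mem_tensorIdeal_mul {I J : Ideal H} {z : X ⊗[k] H} (hz : z ∈ tensorIdeal k X I)
    {c : H} (hc : c ∈ J) : mulLast k H X (z ⊗ₜ c) ∈ tensorIdeal k X (I * J) := by
  obtain ⟨t, rfl⟩ := hz
  induction t using TensorProduct.induction_on with
  | zero => simp
  | tmul x a => simpa using tmul_mem_tensorIdeal k x (Ideal.mul_mem_mul a.2 hc)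
  | add t t' ht ht' => simpa only [map_add, add_tmul] using add_mem ht ht'

lemma mulLast_rTensor_mem_tensorIdeal_mul {I J : Ideal H} {g : Y →ₗ[k] X ⊗[k] H}
    (hg : ∀ y, g y ∈ tensorIdeal k X I) {s : Y ⊗[k] H} (hs : s ∈ tensorIdeal k Y J) :
    mulLast k H X (rTensor H g s) ∈ tensorIdeal k X (I * J) := by
  obtain ⟨t, rfl⟩ := hs
  induction t using TensorProduct.induction_on with
  | zero => simp
  | tmul y c => exact mulLast_mem_tensorIdeal_mul k H (hg y) c.2
  | add t t' ht ht' => simpa only [map_add] using add_mem ht ht'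

lemma ker_counitLast_le_tensorIdeal :
    ker (counitLast k H X) ≤ tensorIdeal k X (RingHom.ker (Bialgebra.counitAlgHom k H)) := by
  intro z hz
  have hexact := Module.Flat.lTensor_exact X (exact_subtype_ker_map (counit (R := k) (A := H)))
  obtain ⟨t, rfl⟩ := (hexact z).mp <| by simpa [counitLast] using hz
  exact ⟨t, rfl⟩

end Filtration

section AdicFiltration

variable (H : Type u) [CommRing H] [HopfAlgebra k H] {X : Type u} [AddCommGroup X] [Module k X]

lemma eq_zero_of_eq_mulLast_rTensor {I : Ideal H} (hI : ⨅ n : ℕ, I ^ n = ⊥) {g : X →ₗ[k] X ⊗[k] H}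
    {ν : X → X ⊗[k] H} (hν : ∀ x, ν x ∈ tensorIdeal k X I)
    (hg : ∀ x, g x = mulLast k H X (rTensor H g (ν x))) : g = 0 := by
  have hmem (n : ℕ) (x : X) : g x ∈ tensorIdeal k X (I ^ n) := by
    induction n generalizing x with
    | zero => simpa only [pow_zero, Ideal.one_eq_top] using mem_tensorIdeal_top k (g x)
    | succ n ih =>
      rw [hg x, pow_succ]
      exact mulLast_rTensor_mem_tensorIdeal_mul k H ih (hν x)
  exact LinearMap.ext fun x => eq_zero_of_forall_mem_tensorIdeal k hI (hmem · x)

end AdicFiltration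

section PartialComodule

variable (ρ : M →ₗ[k] M ⊗[k] H)

def twist : M →ₗ[k] M ⊗[k] H :=
  mulLast k H M ∘ₗ antLast k H (M ⊗[k] H) ∘ₗ rTensor H ρ ∘ₗ ρ

variable {k H ρ}

namespace IsPartialComodule

lemma galoisLastInv_comp (hρ : IsPartialComodule k H ρ) :
    galoisLastInv k H M ∘ₗ rTensor H ρ ∘ₗ ρ = rTensor H (twist k H ρ) ∘ₗ ρ := by
  simpa only [galoisLastInv, twist, rTensor_comp, LinearMap.comp_assoc] using hρ.pcm3

lemma rTensor_comp_self (hρ : IsPartialComodule k H ρ) : rTensor H ρ ∘ₗ ρ =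
    rTensor H (mulLast k H M ∘ₗ rTensor H (twist k H ρ)) ∘ₗ comulLast k H M ∘ₗ ρ := by
  calc rTensor H ρ ∘ₗ ρ = galoisLast k H M ∘ₗ galoisLastInv k H M ∘ₗ rTensor H ρ ∘ₗ ρ := by
        rw [← LinearMap.comp_assoc, galoisLast_comp_galoisLastInv, LinearMap.id_comp]
    _ = _ := by
        rw [hρ.galoisLastInv_comp, ← LinearMap.comp_assoc, galoisLast_comp_rTensor,
          LinearMap.comp_assoc]

lemma mulLast_rTensor_twist_comp_self (hρ : IsPartialComodule k H ρ) :
    mulLast k H M ∘ₗ rTensor H (twist k H ρ) ∘ₗ ρ = ρ := by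
  calc mulLast k H M ∘ₗ rTensor H (twist k H ρ) ∘ₗ ρ
      = counitLast k H (M ⊗[k] H) ∘ₗ rTensor H (mulLast k H M ∘ₗ rTensor H (twist k H ρ)) ∘ₗ
          comulLast k H M ∘ₗ ρ := by
        simp only [← LinearMap.comp_assoc, counitLast_comp_rTensor]
        rw [LinearMap.comp_assoc (comulLast k H M), counitLast_comp_comulLast, LinearMap.comp_id]
    _ = counitLast k H (M ⊗[k] H) ∘ₗ rTensor H ρ ∘ₗ ρ := by rw [← hρ.rTensor_comp_self]
    _ = ρ := by
        rw [← LinearMap.comp_assoc, counitLast_comp_rTensor, LinearMap.comp_assoc, hρ.counit,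
          LinearMap.comp_id]

lemma twist_sub_unitLast_apply (hρ : IsPartialComodule k H ρ) (m : M) :
    (twist k H ρ - unitLast k H M) m =
      mulLast k H M (rTensor H (twist k H ρ - unitLast k H M) ((unitLast k H M - ρ) m)) := by
  have hρm := congr($(hρ.mulLast_rTensor_twist_comp_self) m)
  simp only [LinearMap.comp_apply] at hρm
  simp [rTensor_sub, hρm, ← LinearMap.comp_apply (mulLast k H M), mulLast_comp_rTensor_unitLast]

lemma unitLast_sub_mem_tensorIdeal (hρ : IsPartialComodule k H ρ) (m : M) :
    (unitLast k H M - ρ) m ∈ tensorIdeal k M (RingHom.ker (Bialgebra.counitAlgHom k H)) :=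
  ker_counitLast_le_tensorIdeal k H <| by
    simpa [sub_eq_zero] using congr($(hρ.counit) m).symm

end IsPartialComodule

end PartialComodule

theorem partialComodule_global_of_connected_general
    (k : Type u) [Field k]
    (H : Type u) [CommRing H] [HopfAlgebra k H]
    (hker : (⨅ n : ℕ, (RingHom.ker (Bialgebra.counitAlgHom k H)) ^ n) = ⊥)
    {M : Type u} [AddCommGroup M] [Module k M]
    (ρ : M →ₗ[k] M ⊗[k] H) (hρ : IsPartialComodule k H ρ) :
    comulLast k H M ∘ₗ ρ = LinearMap.rTensor H ρ ∘ₗ ρ := by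
  have htwist : twist k H ρ = unitLast k H M := sub_eq_zero.mp <|
    eq_zero_of_eq_mulLast_rTensor k H hker hρ.unitLast_sub_mem_tensorIdeal
      hρ.twist_sub_unitLast_apply
  rw [hρ.rTensor_comp_self, htwist, mulLast_comp_rTensor_unitLast, rTensor_id, LinearMap.id_comp]

/-- Over an algebraically closed field of characteristic `0`, if `H` is a
finitely generated commutative Hopf algebra whose augmentation ideal `ker ε` satisfies
`⋂ₙ (ker ε)ⁿ = 0` (e.g. `H = O(G)` for a connected linear algebraic group `G`), then every
partial `H`-comodule is global, i.e. its coaction is coassociative. -/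
theorem partialComodule_global_of_connected
    (k : Type u) [Field k] [IsAlgClosed k] [CharZero k]
    (H : Type u) [CommRing H] [HopfAlgebra k H]
    (hfg : Algebra.FiniteType k H)
    (hker : (⨅ n : ℕ, (RingHom.ker (Bialgebra.counitAlgHom k H)) ^ n) = ⊥)
    {M : Type u} [AddCommGroup M] [Module k M]
    (ρ : M →ₗ[k] M ⊗[k] H) (hρ : IsPartialComodule k H ρ) :
    comulLast k H M ∘ₗ ρ = LinearMap.rTensor H ρ ∘ₗ ρ :=
  partialComodule_global_of_connected_general k H hker ρ hρ
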